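/- Let P = {x ∈ ℝ² : Ax ≤ b} be a convex polygon with nonempty interior where every row A_i of A ∈ ℝ^{m×2} has unit norm and every row defines an edge of P, let n ≥ 2, r = I(P), f_i(t) = width_{A_i}(interior_t(P)) − 2(n−1)t, M_i = max { t ≥ 0 : ∃ x with Ax ≤ b − t·(1,…,1) and A_i·x = b_i − t }, and let ρ ∈ (0,r) be the unique number with width(P^ρ) = 2nρ. Then ρ = min { t ∈ (0,r) : ∃ i ∈ [m] with f_i(t) = 0 and f_i(min(M_i, r)) ≤ 0 }. -/

import Mathlib

open Metric Set
open scoped RealInnerProductSpace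

/-- The directional width of a set `K` in direction `v`. -/
noncomputable def dirWidth (v : EuclideanSpace ℝ (Fin 2))
    (K : Set (EuclideanSpace ℝ (Fin 2))) : ℝ :=
  sSup ((fun x => ⟪v, x⟫) '' K) - sInf ((fun x => ⟪v, x⟫) '' K)

/-- The width of `K`: the minimum directional width over all unit directions. -/
noncomputable def setWidth (K : Set (EuclideanSpace ℝ (Fin 2))) : ℝ :=
  sInf {w | ∃ v : EuclideanSpace ℝ (Fin 2), ‖v‖ = 1 ∧ w = dirWidth v K}

/-- The inner parallel body of `P` at distance `t`. -/
def innerParallel (P : Set (EuclideanSpace ℝ (Fin 2))) (t : ℝ) :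
    Set (EuclideanSpace ℝ (Fin 2)) :=
  {x ∈ P | closedBall x t ⊆ P}

/-- The `t`-rounded body `P^t`: the union of all closed `t`-balls contained in `P`. -/
def rounded (P : Set (EuclideanSpace ℝ (Fin 2))) (t : ℝ) :
    Set (EuclideanSpace ℝ (Fin 2)) :=
  {y | ∃ x, closedBall x t ⊆ P ∧ y ∈ closedBall x t}

/-- The inradius of `P`. -/
noncomputable def inradius (P : Set (EuclideanSpace ℝ (Fin 2))) : ℝ :=
  sSup {r : ℝ | ∃ x, closedBall x r ⊆ P}

open Filter Topology
open scoped Pointwise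

/-!
Each constraint of `P = {x | Ax ≤ b}` moves inward at unit speed, so the inner parallel body
`P_t` is the polygon `Ax ≤ b - t𝟙` and `P^t = P_t + B(0, t)`; hence
`width_v (P^t) = width_v (P_t) + 2t`, and `t ↦ width_v (P_t) + 2t` is nonincreasing.

The width of a polygon is attained in the direction of a normal `A_i` whose constraint is active.
Take `v` minimizing the width. If a supporting line orthogonal to `v` meets the polygon in a
segment, the constraint active at its midpoint has normal `±v`. Otherwise both supporting lines
touch in single vertices; these are sharp extreme points, and a slight rotation of `v` strictly
decreases the width.

Applied to `P_ρ`, this gives a row `i` with `f_i(ρ) = 0` whose constraint is active on `P_ρ`, so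
`ρ ≤ M_i` and `f_i (min (M_i, r)) ≤ f_i ρ = 0` by monotonicity. A root `t < ρ` of some `f_j` would
give `2nρ = width (P^ρ) ≤ width_{A_j} (P^t) = 2nt`.
-/

section Polyhedron

variable {E : Type*} [NormedAddCommGroup E] [InnerProductSpace ℝ E] {ι : Type*}

def polyhedron (A : ι → E) (c : ι → ℝ) : Set E := {x | ∀ j, ⟪A j, x⟫ ≤ c j}

variable {A : ι → E} {c c' : ι → ℝ}

lemma polyhedron_mono (h : c ≤ c') : polyhedron A c ⊆ polyhedron A c' :=
  fun _ hx j => (hx j).trans (h j)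

lemma isClosed_polyhedron : IsClosed (polyhedron A c) := by
  simp only [polyhedron, ofPred_forall]
  exact isClosed_iInter fun j => isClosed_le (by fun_prop) continuous_const

lemma polyhedron_add_closedBall_subset (hA : ∀ j, ‖A j‖ ≤ 1) {r : ℝ} (h : ∀ j, c' j + r ≤ c j) :
    polyhedron A c' + closedBall (0 : E) r ⊆ polyhedron A c := by
  rintro _ ⟨x, hx, y, hy, rfl⟩ j
  have hy : ⟪A j, y⟫ ≤ r := calc
    ⟪A j, y⟫ ≤ ‖A j‖ * ‖y‖ := real_inner_le_norm _ _
    _ ≤ 1 * r := mul_le_mul (hA j) (mem_closedBall_zero_iff.1 hy) (norm_nonneg _) zero_le_one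
    _ = r := one_mul r
  rw [inner_add_right]
  linarith [hx j, h j]

lemma closedBall_subset_polyhedron_iff (hA : ∀ j, ‖A j‖ = 1) {x : E} {t : ℝ} (ht : 0 ≤ t) :
    closedBall x t ⊆ polyhedron A c ↔ x ∈ polyhedron A fun j => c j - t := by
  refine ⟨fun h j => ?_, fun hx y hy => ?_⟩
  · have hmem : x + t • A j ∈ closedBall x t := by
      simp [norm_smul, hA j, abs_of_nonneg ht]
    have := h hmem j
    rw [inner_add_right, real_inner_smul_right, real_inner_self_eq_norm_sq, hA j] at this
    linarith
  · have hsub := polyhedron_add_closedBall_subset (fun j => (hA j).le)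
      (fun j => (sub_add_cancel (c j) t).le)
    simpa using hsub (add_mem_add hx (mem_closedBall_zero_iff.2 (mem_closedBall_iff_norm.1 hy)))

lemma eventually_add_smul_mem_polyhedron [Finite ι] {p u : E} (hp : p ∈ polyhedron A c)
    (hu : ∀ j, ⟪A j, p⟫ = c j → ⟪A j, u⟫ ≤ 0) :
    ∀ᶠ ε in 𝓝[>] (0 : ℝ), p + ε • u ∈ polyhedron A c := by
  refine Filter.eventually_all.2 fun j => ?_
  rcases (hp j).eq_or_lt with hj | hj
  · filter_upwards [self_mem_nhdsWithin] with ε (hε : 0 < ε)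
    rw [inner_add_right, real_inner_smul_right, hj]
    nlinarith [hu j hj]
  · have hcont : Continuous fun ε : ℝ => ⟪A j, p + ε • u⟫ := by fun_prop
    exact nhdsWithin_le_nhds <| (hcont.tendsto' 0 _ (by simp)).eventually (gt_mem_nhds hj)
      |>.mono fun _ => le_of_lt

lemma exists_inner_eq_of_forall_inner_le [Finite ι] {w p : E} (hw : w ≠ 0)
    (hp : p ∈ polyhedron A c) (hmax : ∀ x ∈ polyhedron A c, ⟪w, x⟫ ≤ ⟪w, p⟫) :
    ∃ j, ⟪A j, p⟫ = c j := by
  by_contra! h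
  obtain ⟨ε, hmem, hε : 0 < ε⟩ := ((eventually_add_smul_mem_polyhedron hp (u := w)
    fun j hj => absurd hj (h j)).and self_mem_nhdsWithin).exists
  have := hmax _ hmem
  rw [inner_add_right, real_inner_smul_right, real_inner_self_eq_norm_sq] at this
  have : 0 < ‖w‖ ^ 2 := by positivity
  nlinarith

lemma exists_sharp_of_forall_inner_lt [Finite ι] [FiniteDimensional ℝ E] {v p : E}
    (hp : p ∈ polyhedron A c) (hlt : ∀ x ∈ polyhedron A c, x ≠ p → ⟪v, x⟫ < ⟪v, p⟫) :
    ∃ κ > 0, ∀ x ∈ polyhedron A c, ⟪v, x⟫ + κ * ‖x - p‖ ≤ ⟪v, p⟫ := by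
  -- `C` is the compact set of unit tangent directions at `p`; `⟪v, ·⟫ < 0` on it, so by
  -- compactness `-⟪v, ·⟫` has a positive lower bound `κ` there.
  set C : Set E := sphere 0 1 ∩ ⋂ j ∈ {j | ⟪A j, p⟫ = c j}, {u | ⟪A j, u⟫ ≤ 0}
  have hC : IsCompact C := (isCompact_sphere 0 1).inter_right <|
    isClosed_biInter fun j _ => isClosed_le (by fun_prop) continuous_const
  have hneg : ∀ u ∈ C, 0 < -⟪v, u⟫ := by
    rintro u ⟨hu, hact⟩
    simp only [mem_iInter, mem_ofPred_eq] at hact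
    obtain ⟨ε, hmem, hε : 0 < ε⟩ :=
      ((eventually_add_smul_mem_polyhedron hp hact).and self_mem_nhdsWithin).exists
    have hne : p + ε • u ≠ p := by
      simpa [hε.ne'] using ne_zero_of_mem_unit_sphere ⟨u, hu⟩
    have := hlt _ hmem hne
    rw [inner_add_right, real_inner_smul_right] at this
    nlinarith
  obtain ⟨κ, hκ, hκC⟩ :=
    hC.exists_forall_le' (by fun_prop : Continuous fun u => -⟪v, u⟫).continuousOn hneg
  refine ⟨κ, hκ, fun x hx => ?_⟩
  rcases eq_or_ne x p with rfl | hxp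
  · simp
  have hpos : 0 < ‖x - p‖ := norm_pos_iff.2 (sub_ne_zero.2 hxp)
  have hu : ‖x - p‖⁻¹ • (x - p) ∈ C := by
    refine ⟨by simp [norm_smul, hpos.ne'], ?_⟩
    simp only [mem_iInter, mem_ofPred_eq]
    intro j hj
    rw [real_inner_smul_right, inner_sub_right, hj]
    exact mul_nonpos_of_nonneg_of_nonpos (by positivity) (by linarith [hx j])
  have := hκC _ hu
  rw [real_inner_smul_right, inner_sub_right, le_neg, inv_mul_le_iff₀ hpos] at this
  linarith

lemma inner_add_le_of_sharp {v w p x : E} {κ : ℝ} (h : ⟪v, x⟫ + κ * ‖x - p‖ ≤ ⟪v, p⟫)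
    (hw : ‖w‖ ≤ κ) : ⟪v + w, x⟫ ≤ ⟪v + w, p⟫ := by
  have : ⟪w, x - p⟫ ≤ κ * ‖x - p‖ :=
    (real_inner_le_norm w _).trans (mul_le_mul_of_nonneg_right hw (norm_nonneg _))
  rw [inner_sub_right] at this
  rw [inner_add_left, inner_add_left]
  linarith

end Polyhedron

section Plane

variable {E : Type*} [NormedAddCommGroup E] [InnerProductSpace ℝ E]

lemma finrank_orthogonal_span_singleton_eq_one (hE : Module.finrank ℝ E = 2) {d : E}
    (hd : d ≠ 0) : Module.finrank ℝ (ℝ ∙ d)ᗮ = 1 :=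
  haveI : Fact (Module.finrank ℝ E = 1 + 1) := ⟨hE⟩
  Submodule.finrank_orthogonal_span_singleton hd

lemma exists_norm_eq_one_inner_eq_zero (hE : Module.finrank ℝ E = 2) {v : E} (hv : v ≠ 0) :
    ∃ e : E, ‖e‖ = 1 ∧ ⟪v, e⟫ = 0 := by
  obtain ⟨⟨w, hw⟩, hw0, -⟩ :=
    finrank_eq_one_iff'.1 (finrank_orthogonal_span_singleton_eq_one hE hv)
  have hw0 : w ≠ 0 := fun h => hw0 (Subtype.ext h)
  refine ⟨‖w‖⁻¹ • w, by simp [norm_smul, hw0], ?_⟩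
  rw [real_inner_smul_right, Submodule.mem_orthogonal_singleton_iff_inner_right.1 hw, mul_zero]

lemma eq_or_eq_neg_of_inner_eq_zero (hE : Module.finrank ℝ E = 2) {d a b : E} (hd : d ≠ 0)
    (ha : ‖a‖ = 1) (hb : ‖b‖ = 1) (hda : ⟪d, a⟫ = 0) (hdb : ⟪d, b⟫ = 0) : a = b ∨ a = -b := by
  let b' : (ℝ ∙ d)ᗮ := ⟨b, Submodule.mem_orthogonal_singleton_iff_inner_right.2 hdb⟩
  have hb' : b' ≠ 0 := fun h => by
    have : b = 0 := congrArg Subtype.val h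
    simp [this] at hb
  obtain ⟨k, hk⟩ := (finrank_eq_one_iff_of_nonzero' b' hb').1
    (finrank_orthogonal_span_singleton_eq_one hE hd)
    ⟨a, Submodule.mem_orthogonal_singleton_iff_inner_right.2 hda⟩
  have hk : k • b = a := congrArg Subtype.val hk
  have hk1 : |k| = 1 := by simpa [← hk, norm_smul, hb] using ha
  rcases abs_eq zero_le_one |>.1 hk1 with rfl | rfl
  · exact Or.inl (by simpa using hk.symm)
  · exact Or.inr (by simpa using hk.symm)

variable {ι : Type*} [Finite ι] {A : ι → E} {c : ι → ℝ}

lemma exists_active_eq_or_eq_neg_of_two_maximizers (hE : Module.finrank ℝ E = 2)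
    (hA : ∀ j, ‖A j‖ = 1) {w z₁ z₂ : E} (hw : ‖w‖ = 1) (hz₁ : z₁ ∈ polyhedron A c)
    (hz₂ : z₂ ∈ polyhedron A c) (hne : z₁ ≠ z₂)
    (hmax : ∀ x ∈ polyhedron A c, ⟪w, x⟫ ≤ ⟪w, z₁⟫) (heq : ⟪w, z₂⟫ = ⟪w, z₁⟫) :
    ∃ j, (∃ z ∈ polyhedron A c, ⟪A j, z⟫ = c j) ∧ (A j = w ∨ A j = -w) := by
  have hmid : ∀ u : E, ⟪u, (2 : ℝ)⁻¹ • (z₁ + z₂)⟫ = (⟪u, z₁⟫ + ⟪u, z₂⟫) / 2 := fun u => by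
    rw [real_inner_smul_right, inner_add_right]; ring
  have hz : (2 : ℝ)⁻¹ • (z₁ + z₂) ∈ polyhedron A c := fun j => by
    rw [hmid]; linarith [hz₁ j, hz₂ j]
  obtain ⟨j, hj⟩ := exists_inner_eq_of_forall_inner_le (norm_ne_zero_iff.1 (hw ▸ one_ne_zero)) hz
    fun x hx => by rw [hmid, heq]; linarith [hmax x hx]
  rw [hmid] at hj
  have hj₁ : ⟪A j, z₁⟫ = c j := by linarith [hz₁ j, hz₂ j]
  have hAd : ⟪z₂ - z₁, A j⟫ = 0 := by
    rw [real_inner_comm, inner_sub_right]; linarith [hz₂ j]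
  have hwd : ⟪z₂ - z₁, w⟫ = 0 := by rw [real_inner_comm, inner_sub_right, heq, sub_self]
  exact ⟨j, ⟨z₁, hz₁, hj₁⟩,
    eq_or_eq_neg_of_inner_eq_zero hE (sub_ne_zero.2 hne.symm) (hA j) hw hAd hwd⟩

end Plane

local notation "ℝ²" => EuclideanSpace ℝ (Fin 2)

section Width

variable {K S T : Set ℝ²} {v : ℝ²}

lemma bddAbove_image_inner (hK : Bornology.IsBounded K) : BddAbove ((fun x => ⟪v, x⟫) '' K) :=
  ((innerSL ℝ v).lipschitz.isBounded_image hK).bddAbove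

lemma bddBelow_image_inner (hK : Bornology.IsBounded K) : BddBelow ((fun x => ⟪v, x⟫) '' K) :=
  ((innerSL ℝ v).lipschitz.isBounded_image hK).bddBelow

lemma dirWidth_nonneg (hK : Bornology.IsBounded K) : 0 ≤ dirWidth v K := by
  rcases K.eq_empty_or_nonempty with rfl | hne
  · simp [dirWidth]
  · exact sub_nonneg.2 <| csInf_le_csSup (hne.image _) (bddBelow_image_inner hK)
      (bddAbove_image_inner hK)

lemma dirWidth_mono (h : S ⊆ T) (hT : Bornology.IsBounded T) : dirWidth v S ≤ dirWidth v T := by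
  rcases S.eq_empty_or_nonempty with rfl | hne
  · simpa [dirWidth] using dirWidth_nonneg hT
  · exact sub_le_sub (csSup_le_csSup (bddAbove_image_inner hT) (hne.image _) (image_mono h))
      (csInf_le_csInf (bddBelow_image_inner hT) (hne.image _) (image_mono h))

lemma dirWidth_eq_inner_sub {p q : ℝ²} (hp : p ∈ K) (hq : q ∈ K)
    (hmax : ∀ x ∈ K, ⟪v, x⟫ ≤ ⟪v, p⟫) (hmin : ∀ x ∈ K, ⟪v, q⟫ ≤ ⟪v, x⟫) :
    dirWidth v K = ⟪v, p - q⟫ := by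
  rw [dirWidth, inner_sub_right,
    IsGreatest.csSup_eq ⟨mem_image_of_mem _ hp, forall_mem_image.2 hmax⟩,
    IsLeast.csInf_eq ⟨mem_image_of_mem _ hq, forall_mem_image.2 hmin⟩]

lemma dirWidth_singleton (p : ℝ²) : dirWidth v {p} = 0 := by
  simp [dirWidth]

lemma dirWidth_neg : dirWidth (-v) K = dirWidth v K := by
  have : (fun x => ⟪-v, x⟫) '' K = -((fun x => ⟪v, x⟫) '' K) := by
    simp only [inner_neg_left, ← image_neg_eq_neg, image_image]
  rw [dirWidth, dirWidth, this, Real.sSup_neg, Real.sInf_neg]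
  ring

lemma dirWidth_smul {a : ℝ} (ha : 0 ≤ a) : dirWidth (a • v) K = a * dirWidth v K := by
  have : (fun x => ⟪a • v, x⟫) '' K = a • ((fun x => ⟪v, x⟫) '' K) := by
    simp only [real_inner_smul_left, ← image_smul, image_image, smul_eq_mul]
  rw [dirWidth, dirWidth, this, Real.sSup_smul_of_nonneg ha, Real.sInf_smul_of_nonneg ha,
    smul_eq_mul, smul_eq_mul, mul_sub]

lemma dirWidth_add (hS : S.Nonempty) (hS' : Bornology.IsBounded S) (hT : T.Nonempty)
    (hT' : Bornology.IsBounded T) : dirWidth v (S + T) = dirWidth v S + dirWidth v T := by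
  have : (fun x => ⟪v, x⟫) '' (S + T) = (fun x => ⟪v, x⟫) '' S + (fun x => ⟪v, x⟫) '' T :=
    image_add (innerSL ℝ v)
  rw [dirWidth, dirWidth, dirWidth, this,
    csSup_add (hS.image _) (bddAbove_image_inner hS') (hT.image _) (bddAbove_image_inner hT'),
    csInf_add (hS.image _) (bddBelow_image_inner hS') (hT.image _) (bddBelow_image_inner hT')]
  ring

lemma dirWidth_closedBall_zero (hv : ‖v‖ = 1) {t : ℝ} (ht : 0 ≤ t) :
    dirWidth v (closedBall 0 t) = 2 * t := by
  have hle : ∀ x ∈ closedBall (0 : ℝ²) t, |⟪v, x⟫| ≤ t := fun x hx => by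
    simpa [hv] using (abs_real_inner_le_norm v x).trans
      (mul_le_mul_of_nonneg_left (mem_closedBall_zero_iff.1 hx) (norm_nonneg v))
  have hself : ⟪v, t • v⟫ = t := by
    rw [real_inner_smul_right, real_inner_self_eq_norm_sq, hv, one_pow, mul_one]
  rw [dirWidth_eq_inner_sub (p := t • v) (q := -(t • v)) (by simp [norm_smul, hv, abs_of_nonneg ht])
    (by simp [norm_smul, hv, abs_of_nonneg ht])
    (fun x hx => by rw [hself]; exact (abs_le.1 (hle x hx)).2)
    (fun x hx => by rw [inner_neg_right, hself]; exact (abs_le.1 (hle x hx)).1),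
    sub_neg_eq_add, inner_add_right, hself]
  ring

lemma continuous_dirWidth (hK : IsCompact K) : Continuous fun v => dirWidth v K :=
  (hK.continuous_sSup (f := fun v x => ⟪v, x⟫) (by fun_prop)).sub
    (hK.continuous_sInf (f := fun v x => ⟪v, x⟫) (by fun_prop))

lemma setWidth_le_dirWidth (hK : Bornology.IsBounded K) (hv : ‖v‖ = 1) :
    setWidth K ≤ dirWidth v K :=
  csInf_le ⟨0, by rintro _ ⟨u, -, rfl⟩; exact dirWidth_nonneg hK⟩ ⟨v, hv, rfl⟩

lemma setWidth_eq_dirWidth (hv : ‖v‖ = 1) (h : ∀ u : ℝ², ‖u‖ = 1 → dirWidth v K ≤ dirWidth u K) :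
    setWidth K = dirWidth v K :=
  IsLeast.csInf_eq ⟨⟨v, hv, rfl⟩, by rintro _ ⟨u, hu, rfl⟩; exact h u hu⟩

end Width

section Bodies

variable {ι : Type*} {A : ι → ℝ²} {c : ι → ℝ}

lemma rounded_eq_innerParallel_add_closedBall (P : Set ℝ²) (t : ℝ) :
    rounded P t = innerParallel P t + closedBall 0 t := by
  ext y
  constructor
  · rintro ⟨x, hx, hy⟩
    exact ⟨x, ⟨hx (mem_closedBall_self (nonempty_closedBall.1 ⟨y, hy⟩)), hx⟩, y - x,
      mem_closedBall_zero_iff.2 (mem_closedBall_iff_norm.1 hy), add_sub_cancel x y⟩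
  · rintro ⟨x, ⟨-, hx⟩, z, hz, rfl⟩
    exact ⟨x, hx, by simpa [mem_closedBall_iff_norm] using hz⟩

lemma rounded_subset (P : Set ℝ²) (t : ℝ) : rounded P t ⊆ P :=
  fun _ ⟨_, hx, hy⟩ => hx hy

lemma exists_closedBall_subset_of_lt_inradius {P : Set ℝ²} {t : ℝ} (h : t < inradius P) :
    ∃ x, closedBall x t ⊆ P := by
  have hne : {r : ℝ | ∃ x, closedBall x r ⊆ P}.Nonempty := ⟨-1, 0, by simp⟩
  obtain ⟨r, ⟨x, hx⟩, htr⟩ := exists_lt_of_lt_csSup hne h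
  exact ⟨x, (closedBall_subset_closedBall htr.le).trans hx⟩

lemma innerParallel_polyhedron (hA : ∀ j, ‖A j‖ = 1) {t : ℝ} (ht : 0 ≤ t) :
    innerParallel (polyhedron A c) t = polyhedron A fun j => c j - t := by
  ext x
  rw [innerParallel, mem_sep_iff, closedBall_subset_polyhedron_iff hA ht, and_iff_right_iff_imp]
  exact fun hx => polyhedron_mono (fun j => sub_le_self (c j) ht) hx

lemma dirWidth_rounded_polyhedron (hA : ∀ j, ‖A j‖ = 1) {v : ℝ²} (hv : ‖v‖ = 1) {t : ℝ}
    (ht : 0 ≤ t) (hb : Bornology.IsBounded (polyhedron A c))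
    (hne : (polyhedron A fun j => c j - t).Nonempty) :
    dirWidth v (rounded (polyhedron A c) t)
      = dirWidth v (polyhedron A fun j => c j - t) + 2 * t := by
  rw [rounded_eq_innerParallel_add_closedBall, innerParallel_polyhedron hA ht,
    dirWidth_add hne (hb.subset (polyhedron_mono fun j => sub_le_self (c j) ht))
      (nonempty_closedBall.2 ht) isBounded_closedBall, dirWidth_closedBall_zero hv ht]

lemma dirWidth_polyhedron_add_le (hA : ∀ j, ‖A j‖ = 1) {v : ℝ²} (hv : ‖v‖ = 1) {s t : ℝ}
    (hts : t ≤ s) (hne : (polyhedron A fun j => c j - s).Nonempty)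
    (hb : Bornology.IsBounded (polyhedron A fun j => c j - t)) :
    dirWidth v (polyhedron A fun j => c j - s) + 2 * (s - t)
      ≤ dirWidth v (polyhedron A fun j => c j - t) := by
  rw [← dirWidth_closedBall_zero hv (sub_nonneg.2 hts),
    ← dirWidth_add hne (hb.subset (polyhedron_mono fun j => sub_le_sub_left hts (c j)))
      (nonempty_closedBall.2 (sub_nonneg.2 hts)) isBounded_closedBall]
  exact dirWidth_mono (polyhedron_add_closedBall_subset (fun j => (hA j).le)
    fun j => by linarith) hb

end Bodies

section WidthDirection

variable {K : Set ℝ²} {v : ℝ²}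

/-- Tilting `v` to `w = v + σ • e` with `e ⟂ v` and `|σ| = κ` keeps `p` and `q` extremal, so
the width in direction `w / ‖w‖` is `(⟪v, p - q⟫ + σ ⟪e, p - q⟫) / ‖w‖`; the sign of `σ` makes the
numerator at most `⟪v, p - q⟫`, and `‖w‖ > 1`. -/
lemma exists_dirWidth_lt_of_sharp (hv : ‖v‖ = 1) {p q : ℝ²} (hp : p ∈ K) (hq : q ∈ K)
    (hpq : p ≠ q) {κ : ℝ} (hκ : 0 < κ) (hpmax : ∀ x ∈ K, ⟪v, x⟫ + κ * ‖x - p‖ ≤ ⟪v, p⟫)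
    (hqmax : ∀ x ∈ K, ⟪-v, x⟫ + κ * ‖x - q‖ ≤ ⟪-v, q⟫) :
    ∃ u : ℝ², ‖u‖ = 1 ∧ dirWidth u K < dirWidth v K := by
  obtain ⟨e, he, hve⟩ := exists_norm_eq_one_inner_eq_zero finrank_euclideanSpace_fin
    (norm_ne_zero_iff.1 (hv ▸ one_ne_zero))
  obtain ⟨σ, hσ, hσs⟩ : ∃ σ : ℝ, |σ| = κ ∧ σ * ⟪e, p - q⟫ ≤ 0 := by
    rcases le_total 0 ⟪e, p - q⟫ with h | h
    · exact ⟨-κ, by simp [hκ.le], by nlinarith⟩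
    · exact ⟨κ, abs_of_pos hκ, by nlinarith⟩
  set w := v + σ • e
  have hσe : ‖σ • e‖ ≤ κ := by rw [norm_smul, he, mul_one, Real.norm_eq_abs, hσ]
  have hW : dirWidth v K = ⟪v, p - q⟫ := dirWidth_eq_inner_sub hp hq
    (fun x hx => by linarith [hpmax x hx, mul_nonneg hκ.le (norm_nonneg (x - p))])
    (fun x hx => by
      have := hqmax x hx
      rw [inner_neg_left, inner_neg_left] at this
      linarith [mul_nonneg hκ.le (norm_nonneg (x - q))])
  have hWpos : κ * ‖p - q‖ ≤ ⟪v, p - q⟫ := by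
    have := hqmax p hp
    rw [inner_neg_left, inner_neg_left] at this
    rw [inner_sub_right]; linarith
  have hw : dirWidth w K = ⟪v, p - q⟫ + σ * ⟪e, p - q⟫ := by
    rw [dirWidth_eq_inner_sub hp hq (fun x hx => inner_add_le_of_sharp (hpmax x hx) hσe)
      (fun x hx => by
        have := inner_add_le_of_sharp (hqmax x hx) ((norm_neg (σ • e)).le.trans hσe)
        rwa [← neg_add, inner_neg_left, inner_neg_left, neg_le_neg_iff] at this),
      inner_add_left, real_inner_smul_left]
  have hnorm : 1 < ‖w‖ := by
    have h := norm_add_sq_eq_norm_sq_add_norm_sq_real (x := v) (y := σ • e)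
      (by rw [real_inner_smul_right, hve, mul_zero])
    rw [hv, norm_smul, he, Real.norm_eq_abs, hσ] at h
    nlinarith [norm_nonneg w]
  refine ⟨‖w‖⁻¹ • w, by simp [norm_smul, (zero_lt_one.trans hnorm).ne'], ?_⟩
  rw [dirWidth_smul (inv_nonneg.2 (norm_nonneg w)), hw, hW]
  have hpos : 0 < ⟪v, p - q⟫ := (mul_pos hκ (norm_pos_iff.2 (sub_ne_zero.2 hpq))).trans_le hWpos
  calc ‖w‖⁻¹ * (⟪v, p - q⟫ + σ * ⟪e, p - q⟫) ≤ ‖w‖⁻¹ * ⟪v, p - q⟫ := by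
        gcongr; linarith
    _ < ⟪v, p - q⟫ := mul_lt_of_lt_one_left hpos (inv_lt_one_of_one_lt₀ hnorm)

variable {ι : Type*} [Finite ι] {A : ι → ℝ²} {c : ι → ℝ}

lemma exists_active_eq_or_eq_neg_of_forall_dirWidth_le (hA : ∀ j, ‖A j‖ = 1)
    (hb : Bornology.IsBounded (polyhedron A c)) (hnt : (polyhedron A c).Nontrivial)
    (hv : ‖v‖ = 1)
    (hvmin : ∀ u : ℝ², ‖u‖ = 1 → dirWidth v (polyhedron A c) ≤ dirWidth u (polyhedron A c)) :
    ∃ j, (∃ z ∈ polyhedron A c, ⟪A j, z⟫ = c j) ∧ (A j = v ∨ A j = -v) := by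
  have hP : IsCompact (polyhedron A c) := isCompact_of_isClosed_isBounded isClosed_polyhedron hb
  obtain ⟨p, hp, hpmax⟩ := hP.exists_isMaxOn hnt.nonempty
    (by fun_prop : Continuous fun x => ⟪v, x⟫).continuousOn
  obtain ⟨q, hq, hqmax⟩ := hP.exists_isMaxOn hnt.nonempty
    (by fun_prop : Continuous fun x => ⟪-v, x⟫).continuousOn
  rw [isMaxOn_iff] at hpmax hqmax
  by_cases hp' : ∃ y ∈ polyhedron A c, y ≠ p ∧ ⟪v, y⟫ = ⟪v, p⟫
  · obtain ⟨y, hy, hyp, hyv⟩ := hp'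
    exact exists_active_eq_or_eq_neg_of_two_maximizers finrank_euclideanSpace_fin hA hv hp hy
      hyp.symm hpmax hyv
  by_cases hq' : ∃ y ∈ polyhedron A c, y ≠ q ∧ ⟪-v, y⟫ = ⟪-v, q⟫
  · obtain ⟨y, hy, hyq, hyv⟩ := hq'
    obtain ⟨j, hj, hjv⟩ := exists_active_eq_or_eq_neg_of_two_maximizers finrank_euclideanSpace_fin
      hA (by rwa [norm_neg]) hq hy hyq.symm hqmax hyv
    exact ⟨j, hj, by rwa [neg_neg, or_comm] at hjv⟩
  push Not at hp' hq'
  exfalso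
  obtain ⟨κ₁, hκ₁, hsharp₁⟩ := exists_sharp_of_forall_inner_lt hp
    fun x hx hxp => (hpmax x hx).lt_of_ne (hp' x hx hxp)
  obtain ⟨κ₂, hκ₂, hsharp₂⟩ := exists_sharp_of_forall_inner_lt hq
    fun x hx hxq => (hqmax x hx).lt_of_ne (hq' x hx hxq)
  have hpq : p ≠ q := by
    rintro rfl
    obtain ⟨x, hx, hxp⟩ := hnt.exists_ne p
    refine hp' x hx hxp (le_antisymm (hpmax x hx) ?_)
    simpa [inner_neg_left] using hqmax x hx
  have weaken : ∀ {w z x : ℝ²} {κ : ℝ}, min κ₁ κ₂ ≤ κ → ⟪w, x⟫ + κ * ‖x - z‖ ≤ ⟪w, z⟫ →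
      ⟪w, x⟫ + min κ₁ κ₂ * ‖x - z‖ ≤ ⟪w, z⟫ := fun hκ h =>
    le_trans (by gcongr) h
  obtain ⟨u, hu, hlt⟩ := exists_dirWidth_lt_of_sharp hv hp hq hpq (lt_min hκ₁ hκ₂)
    (fun x hx => weaken (min_le_left _ _) (hsharp₁ x hx))
    (fun x hx => weaken (min_le_right _ _) (hsharp₂ x hx))
  exact (hvmin u hu).not_gt hlt

theorem exists_active_forall_dirWidth_le (hA : ∀ j, ‖A j‖ = 1)
    (hb : Bornology.IsBounded (polyhedron A c)) (hne : (polyhedron A c).Nonempty) :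
    ∃ i, (∃ z ∈ polyhedron A c, ⟪A i, z⟫ = c i) ∧
      ∀ u : ℝ², ‖u‖ = 1 → dirWidth (A i) (polyhedron A c) ≤ dirWidth u (polyhedron A c) := by
  have hP : IsCompact (polyhedron A c) := isCompact_of_isClosed_isBounded isClosed_polyhedron hb
  obtain ⟨v, hv, hvmin⟩ := (isCompact_sphere (0 : ℝ²) 1).exists_isMinOn
    (NormedSpace.sphere_nonempty.2 zero_le_one) (continuous_dirWidth hP).continuousOn
  rw [mem_sphere_zero_iff_norm] at hv
  replace hvmin : ∀ u : ℝ², ‖u‖ = 1 → dirWidth v (polyhedron A c) ≤ dirWidth u (polyhedron A c) :=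
    fun u hu => hvmin (mem_sphere_zero_iff_norm.2 hu)
  rcases hne.exists_eq_singleton_or_nontrivial with ⟨p, hp⟩ | hnt
  · obtain ⟨j, hj⟩ := exists_inner_eq_of_forall_inner_le (norm_ne_zero_iff.1 (hv ▸ one_ne_zero))
      (hp ▸ mem_singleton p : p ∈ polyhedron A c) (by simp [hp])
    refine ⟨j, ⟨p, hp ▸ mem_singleton p, hj⟩, fun u _ => ?_⟩
    rw [hp, dirWidth_singleton]
    exact dirWidth_nonneg (hp ▸ hb)
  · obtain ⟨i, hi, hAi | hAi⟩ := exists_active_eq_or_eq_neg_of_forall_dirWidth_le hA hb hnt hv hvmin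
    · exact ⟨i, hi, hAi ▸ hvmin⟩
    · exact ⟨i, hi, by rw [hAi, dirWidth_neg]; exact hvmin⟩

theorem exists_active_setWidth_rounded_eq (hA : ∀ j, ‖A j‖ = 1) {t : ℝ} (ht : 0 ≤ t)
    (hb : Bornology.IsBounded (polyhedron A c)) (hne : (polyhedron A fun j => c j - t).Nonempty) :
    ∃ i, (∃ z ∈ polyhedron A (fun j => c j - t), ⟪A i, z⟫ = c i - t) ∧
      setWidth (rounded (polyhedron A c) t)
        = dirWidth (A i) (polyhedron A fun j => c j - t) + 2 * t := by
  obtain ⟨i, hi, hmin⟩ := exists_active_forall_dirWidth_le hA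
    (hb.subset (polyhedron_mono fun j => sub_le_self (c j) ht)) hne
  refine ⟨i, hi, ?_⟩
  rw [setWidth_eq_dirWidth (hA i) fun u hu => ?_, dirWidth_rounded_polyhedron hA (hA i) ht hb hne]
  rw [dirWidth_rounded_polyhedron hA (hA i) ht hb hne, dirWidth_rounded_polyhedron hA hu ht hb hne]
  linarith [hmin u hu]

end WidthDirection

theorem rho_eq_min_filtered_root_general {m : ℕ}
    (A : Fin m → EuclideanSpace ℝ (Fin 2)) (b : Fin m → ℝ)
    (hA : ∀ i, ‖A i‖ = 1)
    (hbdd : Bornology.IsBounded {x | ∀ i, ⟪A i, x⟫ ≤ b i})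
    (n : ℕ) (hn : 2 ≤ n)
    (M : Fin m → ℝ)
    (hM : ∀ i, IsGreatest
      {t : ℝ | 0 ≤ t ∧ ∃ x, (∀ j, ⟪A j, x⟫ ≤ b j - t) ∧ ⟪A i, x⟫ = b i - t} (M i))
    (ρ : ℝ) (hρ₀ : 0 < ρ) (hρr : ρ < inradius {x | ∀ j, ⟪A j, x⟫ ≤ b j})
    (hρ : setWidth (rounded {x | ∀ j, ⟪A j, x⟫ ≤ b j} ρ) = 2 * n * ρ) :
    IsLeast
      {t : ℝ | 0 < t ∧ t < inradius {x | ∀ j, ⟪A j, x⟫ ≤ b j} ∧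
        ∃ i : Fin m,
          dirWidth (A i) (innerParallel {x | ∀ j, ⟪A j, x⟫ ≤ b j} t)
              - 2 * ((n : ℝ) - 1) * t = 0 ∧
          dirWidth (A i) (innerParallel {x | ∀ j, ⟪A j, x⟫ ≤ b j}
                (min (M i) (inradius {x | ∀ j, ⟪A j, x⟫ ≤ b j})))
              - 2 * ((n : ℝ) - 1) * min (M i) (inradius {x | ∀ j, ⟪A j, x⟫ ≤ b j}) ≤ 0}
      ρ := by
  rw [show {x | ∀ j, ⟪A j, x⟫ ≤ b j} = polyhedron A b from rfl] at hbdd hρr hρ ⊢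
  have hn₂ : (2 : ℝ) ≤ n := by exact_mod_cast hn
  have hbdd' : ∀ t, 0 ≤ t → Bornology.IsBounded (polyhedron A fun j => b j - t) :=
    fun t ht => hbdd.subset (polyhedron_mono fun j => sub_le_self (b j) ht)
  obtain ⟨x₀, hx₀⟩ := exists_closedBall_subset_of_lt_inradius hρr
  have hne : (polyhedron A fun j => b j - ρ).Nonempty :=
    ⟨x₀, (closedBall_subset_polyhedron_iff hA hρ₀.le).1 hx₀⟩
  obtain ⟨i, ⟨z, hz, hzi⟩, hi⟩ := exists_active_setWidth_rounded_eq hA hρ₀.le hbdd hne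
  have hwidth : dirWidth (A i) (polyhedron A fun j => b j - ρ) = 2 * (n - 1) * ρ := by linarith
  refine ⟨⟨hρ₀, hρr, i, ?_, ?_⟩, ?_⟩
  · rw [innerParallel_polyhedron hA hρ₀.le, hwidth]
    ring
  · have hρM : ρ ≤ min (M i) (inradius (polyhedron A b)) :=
      le_min ((hM i).2 ⟨hρ₀.le, z, hz, hzi⟩) hρr.le
    rw [innerParallel_polyhedron hA (hρ₀.le.trans hρM)]
    have := dirWidth_mono (v := A i)
      (polyhedron_mono fun j => sub_le_sub_left hρM (b j)) (hbdd' ρ hρ₀.le)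
    nlinarith
  · rintro t ⟨ht₀, -, j, hj, -⟩
    rw [innerParallel_polyhedron hA ht₀.le] at hj
    have h₁ := setWidth_le_dirWidth (hbdd.subset (rounded_subset _ ρ)) (hA j)
    rw [hρ, dirWidth_rounded_polyhedron hA (hA j) hρ₀.le hbdd hne] at h₁
    by_contra! htρ
    have h₂ := dirWidth_polyhedron_add_le hA (hA j) htρ.le hne (hbdd' t ht₀.le)
    nlinarith

/-- For a convex polygon `P = {x : Ax ≤ b} ⊆ ℝ²` with nonempty interior, unit-norm rows and
every row defining an edge of `P`, with `n ≥ 2`, `r = I(P)`,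
`f_i(t) = width_{A_i}(interior_t P) − 2(n−1)t` and
`M_i = max {t ≥ 0 : ∃ x, Ax ≤ b − t·𝟙 and A_i·x = b_i − t}`, the unique `ρ ∈ (0,r)` with
`width (P^ρ) = 2nρ` equals `min {t ∈ (0,r) : ∃ i, f_i(t) = 0 and f_i(min(M_i, r)) ≤ 0}`. -/
theorem rho_eq_min_filtered_root {m : ℕ}
    (A : Fin m → EuclideanSpace ℝ (Fin 2)) (b : Fin m → ℝ)
    (hA : ∀ i, ‖A i‖ = 1)
    (hbdd : Bornology.IsBounded {x | ∀ i, ⟪A i, x⟫ ≤ b i})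
    (hint : (interior {x | ∀ i, ⟪A i, x⟫ ≤ b i}).Nonempty)
    (hedge : ∀ i, Module.finrank ℝ
      (vectorSpan ℝ {x ∈ {x | ∀ j, ⟪A j, x⟫ ≤ b j} | ⟪A i, x⟫ = b i}) = 1)
    (n : ℕ) (hn : 2 ≤ n)
    (M : Fin m → ℝ)
    (hM : ∀ i, IsGreatest
      {t : ℝ | 0 ≤ t ∧ ∃ x, (∀ j, ⟪A j, x⟫ ≤ b j - t) ∧ ⟪A i, x⟫ = b i - t} (M i))
    (ρ : ℝ) (hρ₀ : 0 < ρ) (hρr : ρ < inradius {x | ∀ j, ⟪A j, x⟫ ≤ b j})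
    (hρ : setWidth (rounded {x | ∀ j, ⟪A j, x⟫ ≤ b j} ρ) = 2 * n * ρ) :
    IsLeast
      {t : ℝ | 0 < t ∧ t < inradius {x | ∀ j, ⟪A j, x⟫ ≤ b j} ∧
        ∃ i : Fin m,
          dirWidth (A i) (innerParallel {x | ∀ j, ⟪A j, x⟫ ≤ b j} t)
              - 2 * ((n : ℝ) - 1) * t = 0 ∧
          dirWidth (A i) (innerParallel {x | ∀ j, ⟪A j, x⟫ ≤ b j}
                (min (M i) (inradius {x | ∀ j, ⟪A j, x⟫ ≤ b j})))
              - 2 * ((n : ℝ) - 1) * min (M i) (inradius {x | ∀ j, ⟪A j, x⟫ ≤ b j}) ≤ 0}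
      ρ :=
  rho_eq_min_filtered_root_general A b hA hbdd n hn M hM ρ hρ₀ hρr hρ
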